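/- arXiv:2602.05593 — 2 statements merged into one kernel-verified Lean document; each statement's English description precedes it below -/
import Mathlib

section
/- Let N ∈ ℕ and κ > 0, and let t, t' ∈ [0,1]. If |t − t'| < κ / (2πN), then |μ̂_t(ξ) − μ̂_{t'}(ξ)| < κ for all ξ ∈ [−N, N]. -/
/-! Writing `φ_t(u) = μ̂_t(u / 2π)` for the characteristic function, the invariance equation gives
`φ_t(u) = ⅓ (1 + e^{iu/10} + e^{itu/10}) φ_t(u/10)`. Subtracting the recursions for `t` and `t'`,
`Δ = φ_t − φ_{t'}` satisfies `‖Δ(u)‖ ≤ ‖Δ(u/10)‖ + |t − t'| |u| / 30`; iterating, and using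
`Δ(0) = 0` with continuity of `Δ`, gives `‖Δ(u)‖ ≤ |t − t'| |u| / 27`, which for `u = 2πξ`,
`|ξ| ≤ N`, is less than `κ`. -/

open MeasureTheory Filter Set
open scoped ENNReal NNReal

/-- The Fourier transform of a measure on `ℝ`: `μ̂(ξ) = ∫ e^{2πiξx} dμ(x)`. -/
noncomputable def ft (μ : Measure ℝ) (ξ : ℝ) : ℂ :=
  ∫ x, Complex.exp (((2 * Real.pi * ξ * x : ℝ) : ℂ) * Complex.I) ∂μ

/-- `μ_t` is invariant for the IFS `{x/10, (x+1)/10, (x+t)/10}` with weights `(1/3,1/3,1/3)`. -/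
def muInv (t : ℝ) (μ : Measure ℝ) : Prop :=
  μ = (3 : ℝ≥0∞)⁻¹ • (Measure.map (fun x : ℝ => x / 10) μ +
    Measure.map (fun x : ℝ => (x + 1) / 10) μ + Measure.map (fun x : ℝ => (x + t) / 10) μ)

open Complex Topology

lemma norm_exp_ofReal_mul_I_sub_le (a b : ℝ) : ‖exp (a * I) - exp (b * I)‖ ≤ |a - b| := by
  have h : exp (a * I) - exp (b * I) = exp (b * I) * (exp (I * ↑(a - b)) - 1) := by
    rw [mul_sub, mul_one, ← exp_add]
    push_cast
    ring_nf
  rw [h, norm_mul, norm_exp_ofReal_mul_I, one_mul]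
  exact Real.norm_exp_I_mul_ofReal_sub_one_le

lemma norm_le_of_norm_le_norm_mul_add {F : Type*} [SeminormedAddCommGroup F] {f : ℝ → F}
    (hf : ContinuousAt f 0) (hf₀ : f 0 = 0) {r c : ℝ} (hr₀ : 0 ≤ r) (hr₁ : r < 1)
    (h : ∀ x, ‖f x‖ ≤ ‖f (r * x)‖ + c * |x|) (x : ℝ) :
    ‖f x‖ ≤ c * |x| / (1 - r) := by
  have hiter : ∀ n : ℕ, ‖f x‖ ≤ ‖f (r ^ n * x)‖ + c * |x| * ∑ k ∈ Finset.range n, r ^ k := by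
    intro n
    induction n with
    | zero => simp
    | succ n ih =>
      have hstep := h (r ^ n * x)
      rw [← mul_assoc, ← pow_succ', abs_mul, abs_of_nonneg (pow_nonneg hr₀ n)] at hstep
      rw [Finset.sum_range_succ]
      linarith
  have hlim : Tendsto (fun n : ℕ ↦ ‖f (r ^ n * x)‖ + c * |x| * ∑ k ∈ Finset.range n, r ^ k)
      atTop (𝓝 (‖f 0‖ + c * |x| * (1 - r)⁻¹)) := by
    have hpow : Tendsto (fun n : ℕ ↦ r ^ n * x) atTop (𝓝 0) := by
      simpa using (tendsto_pow_atTop_nhds_zero_of_lt_one hr₀ hr₁).mul_const x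
    exact ((hf.tendsto.comp hpow).norm).add
      ((hasSum_geometric_of_lt_one hr₀ hr₁).tendsto_sum_nat.const_mul _)
  simpa [hf₀, div_eq_mul_inv] using ge_of_tendsto' hlim hiter

section CharFun

variable {E : Type*} [MeasurableSpace E] [SeminormedAddCommGroup E] [InnerProductSpace ℝ E]

lemma integrable_exp_inner_mul_I [OpensMeasurableSpace E] (μ : Measure E) [IsFiniteMeasure μ]
    (t : E) : Integrable (fun x ↦ exp (inner ℝ x t * I)) μ := by
  refine (integrable_const (1 : ℝ)).mono' ?_ (ae_of_all _ fun x ↦ ?_)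
  · exact (Continuous.aestronglyMeasurable (by fun_prop))
  · rw [norm_exp_ofReal_mul_I]

lemma charFun_add_measure [OpensMeasurableSpace E] (μ ν : Measure E) [IsFiniteMeasure μ]
    [IsFiniteMeasure ν] (t : E) : charFun (μ + ν) t = charFun μ t + charFun ν t :=
  integral_add_measure (integrable_exp_inner_mul_I μ t) (integrable_exp_inner_mul_I ν t)

lemma charFun_smul_measure (c : ℝ≥0∞) (μ : Measure E) (t : E) :
    charFun (c • μ) t = c.toReal • charFun μ t :=
  integral_smul_measure _ c

end CharFun

lemma charFun_map_add_div (μ : Measure ℝ) (b a u : ℝ) :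
    charFun (μ.map fun x ↦ (x + b) / a) u = charFun μ (u / a) * exp (↑(b * (u / a)) * I) := by
  have hmap : μ.map (fun x ↦ (x + b) / a) = (μ.map (· + b)).map (a⁻¹ * ·) := by
    rw [Measure.map_map (by fun_prop) (by fun_prop)]
    congr 1
    ext x
    simp [div_eq_inv_mul]
  rw [hmap, charFun_map_mul, charFun_map_add_const, div_eq_inv_mul]
  simp [mul_comm]

lemma charFun_eq_of_muInv {t : ℝ} {μ : Measure ℝ} [IsFiniteMeasure μ] (hμ : muInv t μ) (u : ℝ) :
    charFun μ u = 3⁻¹ * (1 + exp (↑(u / 10) * I) + exp (↑(t * (u / 10)) * I))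
      * charFun μ (u / 10) := by
  have hmap₀ : μ.map (fun x ↦ x / 10) = μ.map (fun x ↦ (x + 0) / 10) := by simp
  conv_lhs => rw [hμ, hmap₀]
  rw [charFun_smul_measure, charFun_add_measure, charFun_add_measure, charFun_map_add_div,
    charFun_map_add_div, charFun_map_add_div, ENNReal.toReal_inv]
  simp only [zero_mul, ofReal_zero, exp_zero, one_mul, ENNReal.toReal_ofNat, real_smul]
  push_cast
  ring

lemma norm_charFun_sub_le_div_ten_of_muInv {t t' : ℝ} {μ μ' : Measure ℝ} [IsProbabilityMeasure μ]
    [IsProbabilityMeasure μ'] (hμ : muInv t μ) (hμ' : muInv t' μ') (u : ℝ) :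
    ‖charFun μ u - charFun μ' u‖
      ≤ ‖charFun μ (u / 10) - charFun μ' (u / 10)‖ + |t - t'| / 30 * |u| := by
  rw [charFun_eq_of_muInv hμ, charFun_eq_of_muInv hμ']
  set e := exp (↑(u / 10) * I)
  set eₜ := exp (↑(t * (u / 10)) * I)
  set eₜ' := exp (↑(t' * (u / 10)) * I)
  set φ := charFun μ (u / 10)
  set φ' := charFun μ' (u / 10)
  have hsplit : 3⁻¹ * (1 + e + eₜ) * φ - 3⁻¹ * (1 + e + eₜ') * φ'
      = 3⁻¹ * ((1 + e + eₜ) * (φ - φ') + (eₜ - eₜ') * φ') := by ring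
  have hsum : ‖1 + e + eₜ‖ ≤ 3 := by
    have := norm_add₃_le (a := 1) (b := e) (c := eₜ)
    simp only [norm_one, e, eₜ, norm_exp_ofReal_mul_I] at this
    linarith
  have hdiff : ‖eₜ - eₜ'‖ ≤ |t - t'| * |u| / 10 := by
    refine (norm_exp_ofReal_mul_I_sub_le _ _).trans_eq ?_
    rw [← sub_mul, abs_mul, abs_div, abs_of_pos (by norm_num : (0 : ℝ) < 10)]
    ring
  have hφ' : ‖φ'‖ ≤ 1 := norm_charFun_le_one _
  rw [hsplit, norm_mul, norm_inv, RCLike.norm_ofNat]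
  calc 3⁻¹ * ‖(1 + e + eₜ) * (φ - φ') + (eₜ - eₜ') * φ'‖
      ≤ 3⁻¹ * (‖1 + e + eₜ‖ * ‖φ - φ'‖ + ‖eₜ - eₜ'‖ * ‖φ'‖) := by
        gcongr
        exact (norm_add_le _ _).trans (by rw [norm_mul, norm_mul])
    _ ≤ 3⁻¹ * (3 * ‖φ - φ'‖ + |t - t'| * |u| / 10 * 1) := by gcongr
    _ = ‖φ - φ'‖ + |t - t'| / 30 * |u| := by ring

lemma norm_charFun_sub_le_of_muInv {t t' : ℝ} {μ μ' : Measure ℝ}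
    [IsProbabilityMeasure μ] [IsProbabilityMeasure μ'] (hμ : muInv t μ) (hμ' : muInv t' μ')
    (u : ℝ) : ‖charFun μ u - charFun μ' u‖ ≤ |t - t'| * |u| / 27 := by
  have h := norm_le_of_norm_le_norm_mul_add (f := fun u ↦ charFun μ u - charFun μ' u)
    (r := 10⁻¹) (c := |t - t'| / 30) (by fun_prop) (by simp) (by norm_num) (by norm_num)
    (fun x ↦ by simpa only [inv_mul_eq_div] using norm_charFun_sub_le_div_ten_of_muInv hμ hμ' x) u
  convert h using 1
  ring

lemma ft_eq_charFun (μ : Measure ℝ) (ξ : ℝ) : ft μ ξ = charFun μ (2 * Real.pi * ξ) := by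
  simp [ft, charFun_apply_real]

lemma mul_lt_of_lt_div_of_nonneg {a b κ : ℝ} (hκ : 0 < κ) (hb : 0 ≤ b) (h : a < κ / b) :
    a * b < κ := by
  rcases hb.eq_or_lt with rfl | hb
  · simpa using hκ
  · exact (lt_div_iff₀ hb).mp h

theorem stmt13_general (N : ℕ) (κ : ℝ) (hκ : 0 < κ) (t t' : ℝ)
    (μ μ' : Measure ℝ)
    (hμ : IsProbabilityMeasure μ) (hμ' : IsProbabilityMeasure μ')
    (hinv : muInv t μ) (hinv' : muInv t' μ')
    (hclose : |t - t'| < κ / (2 * Real.pi * N)) :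
    ∀ ξ ∈ Set.Icc (-(N : ℝ)) (N : ℝ), ‖ft μ ξ - ft μ' ξ‖ < κ := by
  intro ξ hξ
  have hfreq : |2 * Real.pi * ξ| ≤ 2 * Real.pi * N := by
    rw [abs_mul, abs_of_pos Real.two_pi_pos]
    exact mul_le_mul_of_nonneg_left (abs_le.mpr hξ) Real.two_pi_pos.le
  have hκ' := mul_lt_of_lt_div_of_nonneg hκ (by positivity) hclose
  calc ‖ft μ ξ - ft μ' ξ‖ ≤ |t - t'| * |2 * Real.pi * ξ| / 27 := by
        rw [ft_eq_charFun, ft_eq_charFun]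
        exact norm_charFun_sub_le_of_muInv hinv hinv' _
    _ ≤ |t - t'| * |2 * Real.pi * ξ| := div_le_self (by positivity) (by norm_num)
    _ ≤ |t - t'| * (2 * Real.pi * N) := by gcongr
    _ < κ := hκ'

/-- If `|t − t'| < κ/(2πN)` then `|μ̂_t(ξ) − μ̂_{t'}(ξ)| < κ` for all `ξ ∈ [−N, N]`. -/
theorem stmt13 (N : ℕ) (κ : ℝ) (hκ : 0 < κ) (t t' : ℝ)
    (ht : t ∈ Set.Icc (0 : ℝ) 1) (ht' : t' ∈ Set.Icc (0 : ℝ) 1)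
    (μ μ' : Measure ℝ)
    (hμ : IsProbabilityMeasure μ) (hμ' : IsProbabilityMeasure μ')
    (hinv : muInv t μ) (hinv' : muInv t' μ')
    (hclose : |t - t'| < κ / (2 * Real.pi * N)) :
    ∀ ξ ∈ Set.Icc (-(N : ℝ)) (N : ℝ), ‖ft μ ξ - ft μ' ξ‖ < κ :=
  stmt13_general N κ hκ t t' μ μ' hμ hμ' hinv hinv' hclose
end

section
/- Let μ be a self-similar measure on ℝ for contracting similarities {R_a}_{a ∈ A} with probability vector (p_a), all p_a > 0, and let J = [min supp(μ), max supp(μ)]. Let f : ℝ → ℝ be continuously differentiable with f'(x) ≠ 0 for all x ∈ J, and let g : f(J) → J be a two-sided inverse of f restricted to J. Then there exists k ∈ ℕ such that, writing S_w = f ∘ R_{a_1} ∘ ⋯ ∘ R_{a_k} ∘ g and p_w = p_{a_1} ⋯ p_{a_k} for each word w = (a_1, …, a_k) ∈ A^k, every S_w maps f(J) into f(J), every S_w is Lipschitz on f(J) with Lipschitz constant at most 0.9, every S_w has non-vanishing derivative on f(J), and f_* μ = Σ_{w ∈ A^k} p_w (S_w)_* (f_* μ). -/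
/-!
The support of `μ` is compact: for large `ρ` each `R_a` pulls `{ρ + n < |x|}` back into
`{ρ + n + 1 < |x|}`, so the masses of these sets do not decrease in `n`, yet they tend to `0`.
The support is also invariant under every `R_a`, so `J` is an `R_a`-invariant interval of full
measure, nondegenerate because `μ` has no atoms. By the mean value theorem `f` is bi-Lipschitz on
`J`, so `S_w` is Lipschitz with constant at most `C t ^ k`, where `t = max_a |r_a| < 1`; this is
`≤ 9/10` for `k` large. The chain rule gives `S_w' y = f' (R_w (g y)) r_w / f' (g y) ≠ 0`.
Iterating the self-similarity `k` times and pushing forward by `f` gives the identity, since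
`S_w ∘ f = f ∘ R_w` on `J`, which carries `μ`.
-/

open MeasureTheory Filter Set
open scoped ENNReal NNReal

/-- The topological support of a measure on `ℝ`. -/
def msupport (μ : Measure ℝ) : Set ℝ := {x | ∀ ε > 0, 0 < μ (Metric.ball x ε)}

/-- Composition `R_{a_1} ∘ ⋯ ∘ R_{a_k}` of the maps of an IFS along a finite word. -/
def wordComp {m : ℕ} (S : Fin m → ℝ → ℝ) : List (Fin m) → ℝ → ℝ
  | [] => id
  | a :: l => S a ∘ wordComp S l

open scoped Topology

lemma msupport_eq_support (μ : Measure ℝ) : msupport μ = μ.support := by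
  ext x
  exact Metric.nhds_basis_ball.mem_measureSupport.symm

namespace MeasureTheory.Measure

lemma mapsTo_support_of_smul_map_le {X : Type*} [TopologicalSpace X] [MeasurableSpace X]
    [BorelSpace X] {μ : Measure X} {S : X → X} {q : ℝ≥0∞} (hS : Continuous S) (hq : q ≠ 0)
    (h : q • μ.map S ≤ μ) : MapsTo S μ.support μ.support := by
  intro x hx
  rw [mem_support_iff_forall] at hx ⊢
  intro U hU
  calc 0 < q * μ (S ⁻¹' U) := ENNReal.mul_pos hq (hx _ (hS.continuousAt hU)).ne'
    _ ≤ q * μ.map S U := by gcongr q * ?_; exact le_map_apply hS.aemeasurable U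
    _ ≤ μ U := le_iff'.1 h U

lemma support_nontrivial {X : Type*} [TopologicalSpace X] [MeasurableSpace X]
    [HereditarilyLindelofSpace X] {μ : Measure X} [NullSingletonClass μ] (hμ : μ ≠ 0) :
    μ.support.Nontrivial := by
  by_contra h
  apply hμ
  rw [← measure_univ_eq_zero]
  refine le_antisymm ?_ zero_le
  calc μ univ ≤ μ μ.support + μ μ.supportᶜ := measure_univ_le_add_compl _
    _ = 0 := by rw [(not_nontrivial_iff.1 h).measure_zero, measure_compl_support, add_zero]

lemma measure_compl_Icc_sInf_sSup_support {μ : Measure ℝ} (h : Bornology.IsBounded μ.support) :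
    μ (Icc (sInf μ.support) (sSup μ.support))ᶜ = 0 :=
  measure_mono_null (compl_subset_compl.2 h.subset_Icc_sInf_sSup) measure_compl_support

lemma sInf_support_lt_sSup_support {μ : Measure ℝ} [NullSingletonClass μ] (hμ : μ ≠ 0)
    (h : Bornology.IsBounded μ.support) : sInf μ.support < sSup μ.support := by
  obtain ⟨x, hx, y, hy, hxy⟩ := (support_nontrivial hμ).exists_lt
  exact (csInf_le h.bddBelow hx).trans_lt (hxy.trans_le (le_csSup h.bddAbove hy))

/-- The masses `μ (E n)` are nondecreasing in `n`, yet tend to `0`. -/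
lemma measure_eq_zero_of_preimage_subset_succ {X ι : Type*} [MeasurableSpace X] [Fintype ι]
    {μ : Measure X} [IsFiniteMeasure μ] {S : ι → X → X} (hS : ∀ a, Measurable (S a))
    {q : ι → ℝ≥0∞} (hq : ∑ a, q a = 1) (hμ : μ = ∑ a, q a • μ.map (S a))
    {E : ℕ → Set X} (hE : ∀ n, MeasurableSet (E n)) (hanti : Antitone E)
    (hempty : ⋂ n, E n = ∅) (hpre : ∀ a n, S a ⁻¹' E n ⊆ E (n + 1)) : μ (E 0) = 0 := by
  have hstep : ∀ n, μ (E n) ≤ μ (E (n + 1)) := fun n => calc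
    μ (E n) = ∑ a, q a * μ (S a ⁻¹' E n) := by
      conv_lhs => rw [hμ]
      simp only [coe_finsetSum, Finset.sum_apply, smul_apply, smul_eq_mul,
        map_apply (hS _) (hE n)]
    _ ≤ ∑ a, q a * μ (E (n + 1)) := by gcongr with a; exact hpre a n
    _ = μ (E (n + 1)) := by rw [← Finset.sum_mul, hq, one_mul]
  have hlim : Tendsto (fun n => μ (E n)) atTop (𝓝 0) := by
    simpa [hempty, Function.comp_def] using
      tendsto_measure_iInter_atTop (fun n => (hE n).nullMeasurableSet) hanti ⟨0, measure_ne_top μ _⟩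
  exact le_antisymm (ge_of_tendsto hlim (Eventually.of_forall fun n =>
    monotone_nat_of_le_succ hstep (Nat.zero_le n))) zero_le

end MeasureTheory.Measure

section WordComp

variable {m : ℕ}

lemma mapsTo_wordComp {S : Fin m → ℝ → ℝ} {s : Set ℝ} (hS : ∀ a, MapsTo (S a) s s) :
    ∀ l, MapsTo (wordComp S l) s s
  | [] => mapsTo_id s
  | a :: l => (hS a).comp (mapsTo_wordComp hS l)

lemma measurable_wordComp {S : Fin m → ℝ → ℝ} (hS : ∀ a, Measurable (S a)) :
    ∀ l, Measurable (wordComp S l)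
  | [] => measurable_id
  | a :: l => (hS a).comp (measurable_wordComp hS l)

lemma wordComp_affine_sub (r c : Fin m → ℝ) (l : List (Fin m)) (x y : ℝ) :
    wordComp (fun a x => r a * x + c a) l x - wordComp (fun a x => r a * x + c a) l y
      = (l.map r).prod * (x - y) := by
  induction l with
  | nil => simp [wordComp]
  | cons a l ih =>
    simp only [wordComp, Function.comp_apply, List.map_cons, List.prod_cons]
    linear_combination r a * ih

lemma lipschitzWith_wordComp_affine (r c : Fin m → ℝ) (l : List (Fin m)) :
    LipschitzWith ‖(l.map r).prod‖₊ (wordComp (fun a x => r a * x + c a) l) :=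
  LipschitzWith.of_dist_le_mul fun x y => by
    simp only [Real.dist_eq, wordComp_affine_sub, abs_mul, coe_nnnorm, Real.norm_eq_abs, le_refl]

lemma hasDerivAt_wordComp_affine (r c : Fin m → ℝ) (l : List (Fin m)) (x : ℝ) :
    HasDerivAt (wordComp (fun a x => r a * x + c a) l) (l.map r).prod x := by
  have h : wordComp (fun a x => r a * x + c a) l =
      fun y => (l.map r).prod * y + wordComp (fun a x => r a * x + c a) l 0 := by
    ext y
    linear_combination wordComp_affine_sub r c l y 0
  rw [h]
  simpa using ((hasDerivAt_id x).const_mul (l.map r).prod).add_const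
    (wordComp (fun a x => r a * x + c a) l 0)

lemma eq_sum_smul_map_wordComp {S : Fin m → ℝ → ℝ} (hS : ∀ a, Measurable (S a))
    {q : Fin m → ℝ≥0∞} {μ : Measure ℝ} (hμ : μ = ∑ a, q a • μ.map (S a)) :
    ∀ k : ℕ, μ = ∑ w : Fin k → Fin m, (∏ i, q (w i)) • μ.map (wordComp S (List.ofFn w))
  | 0 => by simp [wordComp, Measure.map_id]
  | k + 1 => by
    have ih := eq_sum_smul_map_wordComp hS hμ k
    calc μ = ∑ a, q a • μ.map (S a) := hμ
      _ = ∑ a, q a • (∑ w : Fin k → Fin m, (∏ i, q (w i)) •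
            μ.map (wordComp S (List.ofFn w))).map (S a) := by rw [← ih]
      _ = ∑ a, ∑ w : Fin k → Fin m,
            (q a * ∏ i, q (w i)) • μ.map (S a ∘ wordComp S (List.ofFn w)) := by
          refine Finset.sum_congr rfl fun a _ => ?_
          rw [Measure.map_finset_sum' (hS a).aemeasurable, Finset.smul_sum]
          refine Finset.sum_congr rfl fun w _ => ?_
          rw [Measure.map_smul, Measure.map_map (hS a) (measurable_wordComp hS _), smul_smul]
      _ = ∑ w : Fin (k + 1) → Fin m, (∏ i, q (w i)) • μ.map (wordComp S (List.ofFn w)) := by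
          rw [← Fintype.sum_prod_type', ← (Fin.consEquiv fun _ => Fin m).sum_comp]
          refine Fintype.sum_congr _ _ fun aw => ?_
          simp [Fin.consEquiv, Fin.prod_univ_succ, List.ofFn_succ, wordComp]

end WordComp

lemma exists_nnnorm_le_of_abs_lt_one {ι : Type*} [Fintype ι] {r : ι → ℝ} (hr : ∀ a, |r a| < 1) :
    ∃ t : ℝ≥0, t < 1 ∧ ∀ a, ‖r a‖₊ ≤ t :=
  ⟨Finset.univ.sup fun a => ‖r a‖₊,
    (Finset.sup_lt_iff zero_lt_one).2 fun a _ => by rw [← NNReal.coe_lt_one]; exact hr a,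
    fun a => Finset.le_sup (f := fun a => ‖r a‖₊) (Finset.mem_univ a)⟩

lemma nnnorm_prod_map_ofFn_le {m k : ℕ} {r : Fin m → ℝ} {t : ℝ≥0} (hrt : ∀ a, ‖r a‖₊ ≤ t)
    (w : Fin k → Fin m) : ‖((List.ofFn w).map r).prod‖₊ ≤ t ^ k := by
  rw [List.map_ofFn, List.prod_ofFn, nnnorm_prod]
  simpa using Finset.prod_le_pow_card Finset.univ (fun i => ‖r (w i)‖₊) t fun i _ => hrt (w i)

lemma mapsTo_Icc_sInf_sSup_of_affine {K : Set ℝ} {r c : ℝ} (hK : IsCompact K) (hne : K.Nonempty)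
    (h : MapsTo (fun x => r * x + c) K K) :
    MapsTo (fun x => r * x + c) (Icc (sInf K) (sSup K)) (Icc (sInf K) (sSup K)) := by
  have hsub := hK.isBounded.subset_Icc_sInf_sSup
  have hi := hsub (h (hK.sInf_mem hne))
  have hs := hsub (h (hK.sSup_mem hne))
  intro x hx
  refine ordConnected_Icc.uIcc_subset hi hs (mem_uIcc.2 ?_)
  rcases le_total 0 r with hr | hr
  · exact Or.inl ⟨by nlinarith [hx.1], by nlinarith [hx.2]⟩
  · exact Or.inr ⟨by nlinarith [hx.2], by nlinarith [hx.1]⟩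

section SelfSimilar

variable {m : ℕ} {r c : Fin m → ℝ} {q : Fin m → ℝ≥0∞} {μ : Measure ℝ}

lemma isCompact_support_of_affine [IsFiniteMeasure μ] (hr : ∀ a, |r a| < 1)
    (hq : ∑ a, q a = 1) (hμ : μ = ∑ a, q a • μ.map (fun x => r a * x + c a)) :
    IsCompact μ.support := by
  obtain ⟨t, ht1, hrt⟩ := exists_nnnorm_le_of_abs_lt_one hr
  have ht1' : (t : ℝ) < 1 := ht1
  set C := ∑ a, |c a|
  have hC : ∀ a, |c a| ≤ C := fun a =>
    Finset.single_le_sum (f := fun a => |c a|) (fun a _ => abs_nonneg _) (Finset.mem_univ a)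
  -- outside `[-ρ, ρ]`, every `R_a` moves points closer to the origin by at least `1`
  set ρ := (C + 1) / (1 - t)
  have hρ : (1 - t) * ρ = C + 1 := mul_div_cancel₀ _ (by linarith)
  set E : ℕ → Set ℝ := fun n => {x | ρ + n < |x|}
  have hE0 : μ (E 0) = 0 := by
    refine Measure.measure_eq_zero_of_preimage_subset_succ (by fun_prop) hq hμ
      (fun n => measurableSet_lt measurable_const measurable_abs) ?_ ?_ ?_
    · intro n n' hnn' x hx
      have : (n : ℝ) ≤ n' := by exact_mod_cast hnn'
      simp only [E, mem_ofPred_eq] at hx ⊢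
      linarith
    · refine eq_empty_of_forall_notMem fun x hx => ?_
      obtain ⟨n, hn⟩ := exists_nat_gt (|x| - ρ)
      have := mem_iInter.1 hx n
      simp only [E, mem_ofPred_eq] at this
      linarith
    · intro a n x hx
      simp only [E, mem_preimage, mem_ofPred_eq, Nat.cast_succ] at hx ⊢
      by_contra! hxle
      have : |r a * x + c a| ≤ t * (ρ + (n + 1)) + C := calc
        |r a * x + c a| ≤ |r a| * |x| + |c a| := by rw [← abs_mul]; exact abs_add_le _ _
        _ ≤ t * (ρ + (n + 1)) + C := add_le_add (mul_le_mul (hrt a) hxle (abs_nonneg _) t.2) (hC a)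
      nlinarith [t.2, (Nat.cast_nonneg n : (0 : ℝ) ≤ n)]
  have hsub : μ.support ⊆ Metric.closedBall 0 ρ := fun x hx => by
    have hE := Measure.subset_compl_support_of_isOpen
      (isOpen_lt continuous_const continuous_abs) hE0
    have hx' : ¬ ρ < |x| := fun h => hE (by simpa [E] using h) hx
    simpa using not_lt.1 hx'
  exact Metric.isCompact_of_isClosed_isBounded Measure.isClosed_support
    (Metric.isBounded_closedBall.subset hsub)

lemma mapsTo_support_of_affine (hq : ∀ a, q a ≠ 0)
    (hμ : μ = ∑ a, q a • μ.map (fun x => r a * x + c a)) (a : Fin m) :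
    MapsTo (fun x => r a * x + c a) μ.support μ.support :=
  Measure.mapsTo_support_of_smul_map_le (by fun_prop) (hq a) <| calc
    q a • μ.map (fun x => r a * x + c a) ≤ ∑ a, q a • μ.map (fun x => r a * x + c a) :=
      Finset.single_le_sum (f := fun a => q a • μ.map (fun x => r a * x + c a))
        (fun _ _ => Measure.zero_le _) (Finset.mem_univ a)
    _ = μ := hμ.symm

end SelfSimilar

section LeftInverse

variable {f g : ℝ → ℝ} {s : Set ℝ}

lemma exists_dist_le_mul_dist_of_deriv_ne_zero (hs : IsCompact s) (hs' : s.OrdConnected)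
    (hf : ContDiff ℝ 1 f) (hf' : ∀ x ∈ s, deriv f x ≠ 0) :
    ∃ K : ℝ≥0, ∀ x ∈ s, ∀ y ∈ s, dist x y ≤ K * dist (f x) (f y) := by
  obtain ⟨δ, hδ, hδle⟩ := hs.exists_forall_le' (hf.continuous_deriv le_rfl).abs.continuousOn
    fun x hx => abs_pos.2 (hf' x hx)
  refine ⟨δ⁻¹.toNNReal, fun x hx y hy => ?_⟩
  rw [Real.coe_toNNReal _ (inv_nonneg.2 hδ.le), inv_mul_eq_div, le_div_iff₀ hδ]
  wlog hxy : x < y generalizing x y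
  · rcases (not_lt.1 hxy).eq_or_lt with h | h
    · simp [h]
    · rw [dist_comm, dist_comm (f x)]
      exact this y hy x hx h
  obtain ⟨ξ, hξ, hξeq⟩ := exists_deriv_eq_slope f hxy hf.continuous.continuousOn
    (hf.differentiable one_ne_zero).differentiableOn
  have hyx : 0 < y - x := sub_pos.2 hxy
  calc dist x y * δ ≤ (y - x) * |deriv f ξ| := by
        rw [Real.dist_eq, abs_sub_comm, abs_of_pos hyx]
        exact mul_le_mul_of_nonneg_left (hδle ξ (hs'.out hx hy (Ioo_subset_Icc_self hξ))) hyx.le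
    _ = dist (f x) (f y) := by
        rw [hξeq, abs_div, abs_of_pos hyx, Real.dist_eq, abs_sub_comm]
        field_simp

lemma lipschitzOnWith_of_leftInvOn (hg : LeftInvOn g f s) {K : ℝ≥0}
    (h : ∀ x ∈ s, ∀ y ∈ s, dist x y ≤ K * dist (f x) (f y)) : LipschitzOnWith K g (f '' s) :=
  LipschitzOnWith.of_dist_le_mul <| by
    rintro _ ⟨x, hx, rfl⟩ _ ⟨y, hy, rfl⟩
    rw [hg hx, hg hy]
    exact h x hx y hy

lemma hasDerivWithinAt_of_leftInvOn (hg : LeftInvOn g f s) {y f' : ℝ} (hy : y ∈ f '' s)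
    (hgc : ContinuousWithinAt g (f '' s) y) (hf : HasDerivAt f f' (g y)) (hf' : f' ≠ 0) :
    HasDerivWithinAt g f'⁻¹ (f '' s) y :=
  (hf.hasFDerivAt_equiv hf').hasFDerivWithinAt.of_local_left_inverse
    (hgc.tendsto_nhdsWithin (hg.mapsTo (surjOn_image f s))) hy
    (eventually_nhdsWithin_of_forall hg.rightInvOn_image)

lemma UniqueDiffOn.image_of_deriv_ne_zero (hs : UniqueDiffOn ℝ s) (hf : Differentiable ℝ f)
    (hf' : ∀ x ∈ s, deriv f x ≠ 0) : UniqueDiffOn ℝ (f '' s) := by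
  rintro _ ⟨x, hx, rfl⟩
  exact ((hf x).hasDerivAt.hasFDerivAt_equiv (hf' x hx)).hasFDerivWithinAt
    |>.uniqueDiffWithinAt_of_continuousLinearEquiv _ (hs x hx)

lemma derivWithin_comp_comp_ne_zero_of_leftInvOn (hs : UniqueDiffOn ℝ s)
    (hf : Differentiable ℝ f) (hf' : ∀ x ∈ s, deriv f x ≠ 0) (hg : LeftInvOn g f s)
    (hgc : ContinuousOn g (f '' s)) {W : ℝ → ℝ} {P : ℝ} (hW : ∀ x, HasDerivAt W P x)
    (hP : P ≠ 0) (hWs : MapsTo W s s) :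
    ∀ y ∈ f '' s, derivWithin (f ∘ W ∘ g) (f '' s) y ≠ 0 := by
  intro y hy
  have hgy : g y ∈ s := hg.mapsTo (surjOn_image f s) hy
  have hgd := hasDerivWithinAt_of_leftInvOn hg hy (hgc y hy) (hf (g y)).hasDerivAt (hf' _ hgy)
  have hd := (hf _).hasDerivAt.comp_hasDerivWithinAt y ((hW _).comp_hasDerivWithinAt y hgd)
  rw [hd.derivWithin (hs.image_of_deriv_ne_zero hf hf' y hy)]
  exact mul_ne_zero (hf' _ (hWs hgy)) (mul_ne_zero hP (inv_ne_zero (hf' _ hgy)))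

lemma map_map_comp_of_leftInvOn {μ : Measure ℝ} {φ : ℝ → ℝ} (hs : IsCompact s) (hμ : μ sᶜ = 0)
    (hf : Continuous f) (hg : LeftInvOn g f s) (hφ : ContinuousOn (φ ∘ g) (f '' s)) :
    (μ.map f).map (φ ∘ g) = μ.map φ := by
  have hae : ∀ᵐ x ∂μ, x ∈ s := mem_ae_iff.2 hμ
  have hfs : MeasurableSet (f '' s) := (hs.image hf).isClosed.measurableSet
  have hrestrict : (μ.map f).restrict (f '' s) = μ.map f :=
    Measure.restrict_eq_self_of_ae_mem <|
      (ae_map_iff hf.aemeasurable hfs).2 (hae.mono fun x hx => mem_image_of_mem f hx)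
  have hφm : AEMeasurable (φ ∘ g) (μ.map f) := hrestrict ▸ hφ.aemeasurable hfs
  rw [AEMeasurable.map_map_of_aemeasurable hφm hf.aemeasurable]
  exact Measure.map_congr (hae.mono fun x hx => by simp [hg hx])

lemma map_eq_sum_smul_map_comp_wordComp_of_leftInvOn {m : ℕ} {S : Fin m → ℝ → ℝ}
    (hS : ∀ a, Measurable (S a)) {q : Fin m → ℝ≥0∞} {μ : Measure ℝ}
    (hμ : μ = ∑ a, q a • μ.map (S a)) (hs : IsCompact s) (hμs : μ sᶜ = 0) (hf : Continuous f)
    (hg : LeftInvOn g f s) {k : ℕ}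
    (hc : ∀ w : Fin k → Fin m, ContinuousOn (f ∘ wordComp S (List.ofFn w) ∘ g) (f '' s)) :
    μ.map f = ∑ w : Fin k → Fin m,
      (∏ i, q (w i)) • (μ.map f).map (f ∘ wordComp S (List.ofFn w) ∘ g) := by
  conv_lhs => rw [eq_sum_smul_map_wordComp hS hμ k]
  rw [Measure.map_finset_sum' hf.aemeasurable]
  refine Finset.sum_congr rfl fun w _ => ?_
  rw [Measure.map_smul, Measure.map_map hf.measurable (measurable_wordComp hS _)]
  exact congrArg _ (map_map_comp_of_leftInvOn (φ := f ∘ wordComp S _) hs hμs hf hg (hc w)).symm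

end LeftInverse

theorem stmt16_general (m : ℕ) (r c p : Fin m → ℝ)
    (hr : ∀ a, 0 < |r a| ∧ |r a| < 1) (hp : ∀ a, 0 < p a) (hpsum : ∑ a, p a = 1)
    (μ : Measure ℝ) (hprob : IsProbabilityMeasure μ) (hna : ∀ x : ℝ, μ {x} = 0)
    (hinv : μ = ∑ a, ENNReal.ofReal (p a) • Measure.map (fun x : ℝ => r a * x + c a) μ)
    (J : Set ℝ) (hJ : J = Set.Icc (sInf (msupport μ)) (sSup (msupport μ)))
    (f : ℝ → ℝ) (hf : ContDiff ℝ 1 f) (hf' : ∀ x ∈ J, deriv f x ≠ 0)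
    (g : ℝ → ℝ) (hg1 : ∀ x ∈ J, g (f x) = x) :
    ∃ k : ℕ, 0 < k ∧
      (∀ w : Fin k → Fin m,
        MapsTo (f ∘ wordComp (fun a x => r a * x + c a) (List.ofFn w) ∘ g) (f '' J) (f '' J) ∧
        LipschitzOnWith (9 / 10 : ℝ≥0)
          (f ∘ wordComp (fun a x => r a * x + c a) (List.ofFn w) ∘ g) (f '' J) ∧
        (∀ y ∈ f '' J,
          derivWithin (f ∘ wordComp (fun a x => r a * x + c a) (List.ofFn w) ∘ g)
            (f '' J) y ≠ 0)) ∧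
      Measure.map f μ = ∑ w : Fin k → Fin m, ENNReal.ofReal (∏ i, p (w i)) •
        Measure.map (f ∘ wordComp (fun a x => r a * x + c a) (List.ofFn w) ∘ g)
          (Measure.map f μ) := by
  have : NullSingletonClass μ := ⟨hna⟩
  have hq : ∑ a, ENNReal.ofReal (p a) = 1 := by
    rw [← ENNReal.ofReal_sum_of_nonneg fun a _ => (hp a).le, hpsum, ENNReal.ofReal_one]
  rw [msupport_eq_support] at hJ
  have hsupp := isCompact_support_of_affine (fun a => (hr a).2) hq hinv
  have hJc : IsCompact J := hJ ▸ isCompact_Icc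
  have hJμ : μ Jᶜ = 0 := hJ ▸ Measure.measure_compl_Icc_sInf_sSup_support hsupp.isBounded
  have hJu : UniqueDiffOn ℝ J := hJ ▸ uniqueDiffOn_Icc
    (Measure.sInf_support_lt_sSup_support (IsProbabilityMeasure.ne_zero μ) hsupp.isBounded)
  have hRJ : ∀ a, MapsTo (fun x => r a * x + c a) J J := fun a => hJ ▸
    mapsTo_Icc_sInf_sSup_of_affine hsupp (Measure.nonempty_support (IsProbabilityMeasure.ne_zero μ))
      (mapsTo_support_of_affine (fun a => (ENNReal.ofReal_pos.2 (hp a)).ne') hinv a)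
  obtain ⟨M, hM⟩ := hf.contDiffOn.exists_lipschitzOnWith one_ne_zero (hJ ▸ convex_Icc _ _) hJc
  obtain ⟨K, hK⟩ := exists_dist_le_mul_dist_of_deriv_ne_zero hJc (hJ ▸ ordConnected_Icc) hf hf'
  have hgK := lipschitzOnWith_of_leftInvOn hg1 hK
  have hgJ : MapsTo g (f '' J) J := LeftInvOn.mapsTo hg1 (surjOn_image f J)
  obtain ⟨t, ht1, hrt⟩ := exists_nnnorm_le_of_abs_lt_one fun a => (hr a).2
  obtain ⟨k, hk, hk0⟩ := (((NNReal.tendsto_pow_atTop_nhds_zero_of_lt_one ht1).const_mul (M * K)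
    |>.eventually (gt_mem_nhds (show M * K * 0 < 9 / 10 by norm_num))).and
    (eventually_gt_atTop 0)).exists
  have hWJ := mapsTo_wordComp hRJ
  have hlip : ∀ w : Fin k → Fin m, LipschitzOnWith (9 / 10)
      (f ∘ wordComp (fun a x => r a * x + c a) (List.ofFn w) ∘ g) (f '' J) := fun w =>
    (hM.comp (((lipschitzWith_wordComp_affine r c _).lipschitzOnWith).comp hgK hgJ)
      ((hWJ _).comp hgJ)).weaken <| calc
        M * (‖((List.ofFn w).map r).prod‖₊ * K) ≤ M * K * t ^ k := by
          rw [mul_comm _ K, ← mul_assoc]; gcongr; exact nnnorm_prod_map_ofFn_le hrt w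
        _ ≤ 9 / 10 := hk.le
  refine ⟨k, hk0, fun w => ⟨(mapsTo_image f J).comp ((hWJ _).comp hgJ), hlip w, ?_⟩, ?_⟩
  · exact derivWithin_comp_comp_ne_zero_of_leftInvOn hJu (hf.differentiable one_ne_zero) hf' hg1
      hgK.continuousOn (hasDerivAt_wordComp_affine r c _)
      (List.prod_ne_zero (by simpa using fun i => abs_pos.1 (hr (w i)).1)) (hWJ _)
  · simp_rw [ENNReal.ofReal_prod_of_nonneg fun _ _ => (hp _).le]
    exact map_eq_sum_smul_map_comp_wordComp_of_leftInvOn (fun a => by fun_prop) hinv hJc hJμ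
      hf.continuous hg1 fun w => (hlip w).continuousOn

/-- Pushforwards of self-similar measures by `C¹` maps with nonvanishing derivative are
self-conformal: there is an iterate `k` of the IFS such that the conjugated maps
`S_w = f ∘ R_w ∘ g` are contractions of `f(J)` with nonvanishing derivative and
`f_*μ = Σ_w p_w (S_w)_*(f_*μ)`. -/
theorem stmt16 (m : ℕ) (hm : 0 < m) (r c p : Fin m → ℝ)
    (hr : ∀ a, 0 < |r a| ∧ |r a| < 1) (hp : ∀ a, 0 < p a) (hpsum : ∑ a, p a = 1)
    (μ : Measure ℝ) (hprob : IsProbabilityMeasure μ) (hna : ∀ x : ℝ, μ {x} = 0)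
    (hinv : μ = ∑ a, ENNReal.ofReal (p a) • Measure.map (fun x : ℝ => r a * x + c a) μ)
    (J : Set ℝ) (hJ : J = Set.Icc (sInf (msupport μ)) (sSup (msupport μ)))
    (f : ℝ → ℝ) (hf : ContDiff ℝ 1 f) (hf' : ∀ x ∈ J, deriv f x ≠ 0)
    (g : ℝ → ℝ) (hg1 : ∀ x ∈ J, g (f x) = x) (hg2 : ∀ y ∈ f '' J, f (g y) = y) :
    ∃ k : ℕ, 0 < k ∧
      (∀ w : Fin k → Fin m,
        MapsTo (f ∘ wordComp (fun a x => r a * x + c a) (List.ofFn w) ∘ g) (f '' J) (f '' J) ∧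
        LipschitzOnWith (9 / 10 : ℝ≥0)
          (f ∘ wordComp (fun a x => r a * x + c a) (List.ofFn w) ∘ g) (f '' J) ∧
        (∀ y ∈ f '' J,
          derivWithin (f ∘ wordComp (fun a x => r a * x + c a) (List.ofFn w) ∘ g)
            (f '' J) y ≠ 0)) ∧
      Measure.map f μ = ∑ w : Fin k → Fin m, ENNReal.ofReal (∏ i, p (w i)) •
        Measure.map (f ∘ wordComp (fun a x => r a * x + c a) (List.ofFn w) ∘ g)
          (Measure.map f μ) :=
  stmt16_general m r c p hr hp hpsum μ hprob hna hinv J hJ f hf hf' g hg1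
end
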